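/- arXiv:2403.10399 — 7 statements merged into one kernel-verified Lean document; each statement's English description precedes it below -/
import Mathlib

section
/- Convexity of CVaR of a convex random cost: let E be a real normed vector space, (Ξ, μ) a probability space, α ∈ (0,1], and f : E × Ξ → ℝ a function such that ξ ↦ f(x, ξ) is μ-integrable for every x ∈ E, x ↦ f(x, ξ) is convex for every ξ ∈ Ξ, and the relevant integrands are measurable. Then the function x ↦ inf_{ν ∈ ℝ} ( ν + α⁻¹·∫_Ξ (f(x, ξ) − ν)₊ dμ(ξ) ) is convex on E. -/
/-!
For fixed `ν` the Rockafellar objective `ν + α⁻¹ 𝔼[(f(x, ξ) - ν)₊]` is jointly convex in `(x, ν)`,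
being the integral of the convex functions `(x, ν) ↦ (f(x, ξ) - ν)₊`. Minimising a jointly convex
function over one of its variables preserves convexity in the other, and for `α ≤ 1` the
infimum over `ν` is a genuine one since the objective is bounded below by `𝔼[f(x, ξ)]`.
-/

open MeasureTheory Set

section PartialInfimum

variable {E F : Type*} [AddCommGroup E] [Module ℝ E] [AddCommGroup F] [Module ℝ F] [Nonempty F]

theorem ConvexOn.ciInf_of_prod {s : Set E} {g : E → F → ℝ}
    (hg : ConvexOn ℝ (s ×ˢ univ) fun p : E × F => g p.1 p.2)
    (hbdd : ∀ x ∈ s, BddBelow (range (g x))) :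
    ConvexOn ℝ s fun x => ⨅ y, g x y := by
  have hs : Convex ℝ s := by
    have := hg.1.linear_image (LinearMap.fst ℝ E F)
    rwa [LinearMap.coe_fst, fst_image_prod _ univ_nonempty] at this
  refine ⟨hs, fun x hx x' hx' a b ha hb hab => ?_⟩
  rw [Real.smul_iInf_of_nonneg ha, Real.smul_iInf_of_nonneg hb]
  refine le_ciInf_add_ciInf fun y y' => ?_
  calc ⨅ z, g (a • x + b • x') z ≤ g (a • x + b • x') (a • y + b • y') :=
        ciInf_le (hbdd _ (hs hx hx' ha hb hab)) _
    _ ≤ a • g x y + b • g x' y' :=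
        hg.2 (mk_mem_prod hx (mem_univ y)) (mk_mem_prod hx' (mem_univ y')) ha hb hab

end PartialInfimum

section RockafellarObjective

variable {Ξ : Type*} [MeasurableSpace Ξ] (μ : Measure Ξ)

noncomputable def cvarObjective (α : ℝ) (Z : Ξ → ℝ) (ν : ℝ) : ℝ :=
  ν + α⁻¹ * ∫ ξ, max (Z ξ - ν) 0 ∂μ

variable {μ}

theorem integral_le_cvarObjective [IsProbabilityMeasure μ] {α : ℝ} (hα₀ : 0 < α) (hα₁ : α ≤ 1)
    {Z : Ξ → ℝ} (hZ : Integrable Z μ) (ν : ℝ) : ∫ ξ, Z ξ ∂μ ≤ cvarObjective μ α Z ν := by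
  have hZν : Integrable (fun ξ => Z ξ - ν) μ := hZ.sub (integrable_const ν)
  have hpos : 0 ≤ ∫ ξ, max (Z ξ - ν) 0 ∂μ := integral_nonneg fun ξ => le_max_right _ _
  have hinv : 1 ≤ α⁻¹ := one_le_inv₀ hα₀ |>.mpr hα₁
  calc ∫ ξ, Z ξ ∂μ = ν + ∫ ξ, (Z ξ - ν) ∂μ := by
        rw [integral_sub hZ (integrable_const ν)]; simp
    _ ≤ ν + ∫ ξ, max (Z ξ - ν) 0 ∂μ := by
        gcongr ν + ?_
        exact integral_mono hZν hZν.pos_part fun ξ => le_max_left _ _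
    _ ≤ cvarObjective μ α Z ν := by
        unfold cvarObjective
        gcongr
        exact le_mul_of_one_le_left hpos hinv

theorem bddBelow_range_cvarObjective [IsProbabilityMeasure μ] {α : ℝ} (hα₀ : 0 < α)
    (hα₁ : α ≤ 1) {Z : Ξ → ℝ} (hZ : Integrable Z μ) :
    BddBelow (range (cvarObjective μ α Z)) := by
  refine ⟨∫ ξ, Z ξ ∂μ, ?_⟩
  rintro _ ⟨ν, rfl⟩
  exact integral_le_cvarObjective hα₀ hα₁ hZ ν

variable {E : Type*} [AddCommGroup E] [Module ℝ E]

theorem ConvexOn.posPart_sub_prod {s : Set E} {h : E → ℝ} (hh : ConvexOn ℝ s h) :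
    ConvexOn ℝ (s ×ˢ univ) fun p : E × ℝ => max (h p.1 - p.2) 0 := by
  have hfst : ConvexOn ℝ (s ×ˢ univ) fun p : E × ℝ => h p.1 :=
    ⟨hh.1.prod convex_univ, fun p hp q hq a b ha hb hab => hh.2 hp.1 hq.1 ha hb hab⟩
  have hsnd : ConcaveOn ℝ (s ×ˢ univ) fun p : E × ℝ => p.2 :=
    (LinearMap.snd ℝ E ℝ).concaveOn hfst.1
  exact (hfst.sub hsnd).sup (convexOn_const 0 hfst.1)

theorem convexOn_cvarObjective [IsFiniteMeasure μ] {α : ℝ} (hα : 0 ≤ α) {s : Set E}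
    (hs : Convex ℝ s) {F : E → Ξ → ℝ} (hF : ∀ ξ, ConvexOn ℝ s fun x => F x ξ)
    (hint : ∀ x ∈ s, Integrable (F x) μ) :
    ConvexOn ℝ (s ×ˢ univ) fun p : E × ℝ => cvarObjective μ α (F p.1) p.2 := by
  have hs' : Convex ℝ (s ×ˢ (univ : Set ℝ)) := hs.prod convex_univ
  have hintegral : ConvexOn ℝ (s ×ˢ univ) fun p : E × ℝ => ∫ ξ, max (F p.1 ξ - p.2) 0 ∂μ :=
    integral_convexOn_of_integrand_ae hs' (ae_of_all _ fun ξ => (hF ξ).posPart_sub_prod)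
      fun p hp => ((hint p.1 hp.1).sub (integrable_const p.2)).pos_part
  exact ((LinearMap.snd ℝ E ℝ).convexOn hs').add (hintegral.smul (inv_nonneg.mpr hα))

end RockafellarObjective

/-- Convexity of the CVaR (in Rockafellar form) of a cost that is convex in the decision
variable. -/
theorem cvar_convexOn_of_convex_cost
    {E : Type*} [NormedAddCommGroup E] [NormedSpace ℝ E]
    {Ξ : Type*} [MeasurableSpace Ξ] (μ : Measure Ξ) [IsProbabilityMeasure μ]
    (α : ℝ) (hα : α ∈ Set.Ioc (0 : ℝ) 1)
    (f : E → Ξ → ℝ)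
    (hint : ∀ x : E, Integrable (f x) μ)
    (hconv : ∀ ξ : Ξ, ConvexOn ℝ Set.univ (fun x : E => f x ξ)) :
    ConvexOn ℝ Set.univ
      (fun x : E => ⨅ ν : ℝ, ν + α⁻¹ * ∫ ξ, max (f x ξ - ν) 0 ∂μ) := by
  obtain ⟨hα₀, hα₁⟩ := hα
  exact (convexOn_cvarObjective hα₀.le convex_univ hconv fun x _ => hint x).ciInf_of_prod
    fun x _ => bddBelow_range_cvarObjective hα₀ hα₁ (hint x)
end

section
/- Derivative of the Rockafellar penalty in ν: let (Ω, P) be a probability space, Z : Ω → ℝ an integrable random variable with cumulative distribution function F(y) = P(Z ≤ y), and let ν₀ ∈ ℝ be a point at which F is continuous. Then the function ν ↦ E[(Z − ν)₊] is differentiable at ν₀ with derivative F(ν₀) − 1, where (u)₊ = max{u, 0}. -/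
/-!
For `a < b` the difference `(x - b)₊ - (x - a)₊` lies between `(b - a) (1{x ≤ a} - 1)` and
`(b - a) (1{x ≤ b} - 1)`. Integrating against the law of `Z`, every difference quotient of
`ν ↦ E[(Z - ν)₊]` on `[a, b]` lies between `F a - 1` and `F b - 1`, and continuity of `F` at `ν₀`
squeezes the quotients at `ν₀` to `F ν₀ - 1`.
-/

open MeasureTheory Filter Topology Set

theorem hasDerivAt_of_slope_mem_Icc {g h : ℝ → ℝ} {x : ℝ} (hh : ContinuousAt h x)
    (hg : ∀ a b, a < b → slope g a b ∈ Icc (h a) (h b)) : HasDerivAt g (h x) x := by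
  have hbounds : ∀ᶠ ν in 𝓝[≠] x,
      min (h ν) (h x) ≤ slope g x ν ∧ slope g x ν ≤ max (h ν) (h x) := by
    filter_upwards [self_mem_nhdsWithin] with ν (hν : ν ≠ x)
    rcases hν.lt_or_gt with hlt | hgt
    · rw [slope_comm]
      obtain ⟨hlo, hhi⟩ := hg ν x hlt
      exact ⟨(min_le_left _ _).trans hlo, hhi.trans (le_max_right _ _)⟩
    · obtain ⟨hlo, hhi⟩ := hg x ν hgt
      exact ⟨(min_le_right _ _).trans hlo, hhi.trans (le_max_left _ _)⟩
  have hmin : Tendsto (fun ν ↦ min (h ν) (h x)) (𝓝[≠] x) (𝓝 (h x)) := by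
    simpa only [min_self] using
      (hh.min (tendsto_const_nhds (x := h x))).mono_left nhdsWithin_le_nhds
  have hmax : Tendsto (fun ν ↦ max (h ν) (h x)) (𝓝[≠] x) (𝓝 (h x)) := by
    simpa only [max_self] using
      (hh.max (tendsto_const_nhds (x := h x))).mono_left nhdsWithin_le_nhds
  rw [hasDerivAt_iff_tendsto_slope]
  exact tendsto_of_tendsto_of_tendsto_of_le_of_le' hmin hmax
    (hbounds.mono fun _ ↦ And.left) (hbounds.mono fun _ ↦ And.right)

theorem max_sub_zero_sub_max_sub_zero_mem_Icc {a b : ℝ} (hab : a ≤ b) (x : ℝ) :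
    max (x - b) 0 - max (x - a) 0 ∈
      Icc ((b - a) * ((Iic a).indicator 1 x - 1)) ((b - a) * ((Iic b).indicator 1 x - 1)) := by
  simp only [mem_Icc, indicator_apply, mem_Iic, Pi.one_apply]
  split_ifs <;> constructor <;> cases max_cases (x - b) 0 <;> cases max_cases (x - a) 0 <;>
    linarith

theorem integral_indicator_one₀ {Ω : Type*} [MeasurableSpace Ω] {μ : Measure Ω} {s : Set Ω}
    (hs : NullMeasurableSet s μ) : ∫ ω, s.indicator 1 ω ∂μ = μ.real s := by
  simp [integral_indicator₀ hs]

theorem integral_max_sub_zero_sub_mem_Icc {Ω : Type*} [MeasurableSpace Ω] {P : Measure Ω}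
    [IsProbabilityMeasure P] {Z : Ω → ℝ} (hZ : Integrable Z P) {a b : ℝ} (hab : a ≤ b) :
    ∫ ω, max (Z ω - b) 0 ∂P - ∫ ω, max (Z ω - a) 0 ∂P ∈
      Icc ((b - a) * (P.real {ω | Z ω ≤ a} - 1)) ((b - a) * (P.real {ω | Z ω ≤ b} - 1)) := by
  have hpos (c : ℝ) : Integrable (fun ω ↦ max (Z ω - c) 0) P :=
    (hZ.sub (integrable_const c)).pos_part
  have hmeas (c : ℝ) : NullMeasurableSet (Z ⁻¹' Iic c) P :=
    hZ.aemeasurable.nullMeasurable measurableSet_Iic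
  have hind (c : ℝ) : Integrable ((Z ⁻¹' Iic c).indicator 1) P :=
    (integrable_const (1 : ℝ)).indicator₀ (hmeas c)
  have hbound (c : ℝ) :
      Integrable (fun ω ↦ (b - a) * ((Z ⁻¹' Iic c).indicator 1 ω - 1)) P :=
    ((hind c).sub (integrable_const 1)).const_mul _
  have hint (c : ℝ) : ∫ ω, (b - a) * ((Z ⁻¹' Iic c).indicator 1 ω - 1) ∂P =
      (b - a) * (P.real {ω | Z ω ≤ c} - 1) := by
    rw [integral_const_mul, integral_sub (hind c) (integrable_const 1), integral_const,
      integral_indicator_one₀ (hmeas c), probReal_univ, one_smul]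
    rfl
  rw [← integral_sub (hpos b) (hpos a), ← hint a, ← hint b]
  exact ⟨integral_mono (hbound a) ((hpos b).sub (hpos a))
      fun ω ↦ (max_sub_zero_sub_max_sub_zero_mem_Icc hab (Z ω)).1,
    integral_mono ((hpos b).sub (hpos a)) (hbound b)
      fun ω ↦ (max_sub_zero_sub_max_sub_zero_mem_Icc hab (Z ω)).2⟩

/-- Derivative of the Rockafellar penalty in `ν`: if the CDF `F` of an integrable random
variable `Z` is continuous at `ν₀`, then `ν ↦ E[(Z − ν)₊]` is differentiable at `ν₀`
with derivative `F ν₀ − 1`. -/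
theorem hasDerivAt_rockafellar_penalty
    {Ω : Type*} [MeasurableSpace Ω] (P : Measure Ω) [IsProbabilityMeasure P]
    (Z : Ω → ℝ) (hZ : Integrable Z P)
    (ν₀ : ℝ)
    (hF : ContinuousAt (fun y : ℝ => (P {ω | Z ω ≤ y}).toReal) ν₀) :
    HasDerivAt (fun ν : ℝ => ∫ ω, max (Z ω - ν) 0 ∂P)
      ((P {ω | Z ω ≤ ν₀}).toReal - 1) ν₀ := by
  refine hasDerivAt_of_slope_mem_Icc (h := fun y ↦ (P {ω | Z ω ≤ y}).toReal - 1)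
    (hF.sub continuousAt_const) fun a b hab ↦ ?_
  obtain ⟨hlo, hhi⟩ := integral_max_sub_zero_sub_mem_Icc hZ hab.le
  simp only [measureReal_def] at hlo hhi
  rw [slope_def_field, mem_Icc, le_div_iff₀ (sub_pos.2 hab), div_le_iff₀ (sub_pos.2 hab)]
  constructor <;> linarith
end

section
/- The Value at Risk minimizes the Rockafellar objective: let (Ω, P) be a probability space, Z : Ω → ℝ an integrable random variable with continuous cumulative distribution function F, let α ∈ (0,1), and let ν* ∈ ℝ satisfy F(ν*) = 1 − α. Then for every ν ∈ ℝ, ν* + α⁻¹·E[(Z − ν*)₊] ≤ ν + α⁻¹·E[(Z − ν)₊], where (u)₊ = max{u, 0}. In particular, the Value at Risk ν* = inf{ y : F(y) ≥ 1 − α } attains the infimum in the Rockafellar representation of CVaR. -/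
open MeasureTheory

/-!
For all reals `a, b, z`, `(z - a)₊ ≤ (z - b)₊ + (b - a)·1{z > a}`; integrating gives
`E(Z - a)₊ ≤ E(Z - b)₊ + (b - a)·P(Z > a)`. At `a = ν*` the tail probability is `1 - F(ν*) = α`,
so dividing by `α` gives the claim: `1 - P(Z > ν*)/α = 0` is a subgradient of the convex
objective at `ν*`.
-/

lemma max_sub_zero_le_max_sub_zero_add_ite (a b z : ℝ) :
    max (z - a) 0 ≤ max (z - b) 0 + if a < z then b - a else 0 := by
  have := le_max_left (z - b) 0
  have := le_max_right (z - b) 0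
  split_ifs <;> exact max_le (by linarith) (by linarith)

lemma integral_max_sub_zero_le {Ω : Type*} [MeasurableSpace Ω] {P : Measure Ω}
    [IsFiniteMeasure P] {Z : Ω → ℝ} (hZ : Integrable Z P) (a b : ℝ) :
    ∫ ω, max (Z ω - a) 0 ∂P ≤ ∫ ω, max (Z ω - b) 0 ∂P + (b - a) * P.real {ω | a < Z ω} := by
  set tail := {ω | a < Z ω}
  have htail : NullMeasurableSet tail P := nullMeasurableSet_lt aemeasurable_const hZ.aemeasurable
  have hpos : Integrable (fun ω => max (Z ω - b) 0) P := (hZ.sub (integrable_const b)).pos_part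
  have hind : Integrable (tail.indicator fun _ => b - a) P :=
    (integrable_const (b - a)).indicator₀ htail
  calc ∫ ω, max (Z ω - a) 0 ∂P
      ≤ ∫ ω, max (Z ω - b) 0 + tail.indicator (fun _ => b - a) ω ∂P :=
        integral_mono (hZ.sub (integrable_const a)).pos_part (hpos.add hind) fun ω =>
          max_sub_zero_le_max_sub_zero_add_ite a b (Z ω)
    _ = ∫ ω, max (Z ω - b) 0 ∂P + (b - a) * P.real tail := by
        rw [integral_add hpos hind, integral_indicator₀ htail, setIntegral_const, smul_eq_mul,
          mul_comm]

lemma probReal_lt_eq_one_sub_probReal_le {Ω : Type*} [MeasurableSpace Ω] {P : Measure Ω}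
    [IsProbabilityMeasure P] {Z : Ω → ℝ} (hZ : AEMeasurable Z P) (a : ℝ) :
    P.real {ω | a < Z ω} = 1 - P.real {ω | Z ω ≤ a} := by
  rw [← probReal_compl_eq_one_sub₀ (nullMeasurableSet_le hZ aemeasurable_const)]
  congr 1
  ext ω
  exact (not_le (a := Z ω)).symm

theorem var_minimizes_rockafellar_objective_general
    {Ω : Type*} [MeasurableSpace Ω] (P : Measure Ω) [IsProbabilityMeasure P]
    (Z : Ω → ℝ) (hZ : Integrable Z P)
    (α : ℝ) (hα : α ∈ Set.Ioo (0 : ℝ) 1)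
    (νs : ℝ) (hνs : (P {ω | Z ω ≤ νs}).toReal = 1 - α) :
    ∀ ν : ℝ, νs + α⁻¹ * ∫ ω, max (Z ω - νs) 0 ∂P
      ≤ ν + α⁻¹ * ∫ ω, max (Z ω - ν) 0 ∂P := by
  intro ν
  have htail : P.real {ω | νs < Z ω} = α := by
    rw [probReal_lt_eq_one_sub_probReal_le hZ.aemeasurable, measureReal_def, hνs]
    ring
  have hcompare := integral_max_sub_zero_le hZ νs ν
  rw [htail] at hcompare
  calc νs + α⁻¹ * ∫ ω, max (Z ω - νs) 0 ∂P
      ≤ νs + α⁻¹ * (∫ ω, max (Z ω - ν) 0 ∂P + (ν - νs) * α) := by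
        gcongr
        exact (inv_pos.mpr hα.1).le
    _ = ν + α⁻¹ * ∫ ω, max (Z ω - ν) 0 ∂P := by
        field_simp [hα.1.ne']
        ring

/-- The Value at Risk minimizes the Rockafellar objective: if `F` is the (continuous) CDF of
an integrable random variable `Z` and `F νs = 1 − α`, then `νs` minimizes
`ν ↦ ν + α⁻¹ E[(Z − ν)₊]` over `ℝ`. -/
theorem var_minimizes_rockafellar_objective
    {Ω : Type*} [MeasurableSpace Ω] (P : Measure Ω) [IsProbabilityMeasure P]
    (Z : Ω → ℝ) (hZ : Integrable Z P)
    (hF : Continuous fun y : ℝ => (P {ω | Z ω ≤ y}).toReal)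
    (α : ℝ) (hα : α ∈ Set.Ioo (0 : ℝ) 1)
    (νs : ℝ) (hνs : (P {ω | Z ω ≤ νs}).toReal = 1 - α) :
    ∀ ν : ℝ, νs + α⁻¹ * ∫ ω, max (Z ω - νs) 0 ∂P
      ≤ ν + α⁻¹ * ∫ ω, max (Z ω - ν) 0 ∂P :=
  var_minimizes_rockafellar_objective_general P Z hZ α hα νs hνs
end

section
/- Deterministic quantile stability under CDF perturbation: let G, Ĝ : ℝ → ℝ be nondecreasing functions, α ∈ (0,1), δ ≥ 0, and p > 0. Define ν* = inf{ y : G(y) ≥ 1 − α } and ν̂ = inf{ y : Ĝ(y) ≥ 1 − α } (both sets assumed nonempty and bounded below). Assume sup_{y ∈ ℝ} |Ĝ(y) − G(y)| ≤ δ, G is continuous, and G is differentiable with G′(y) ≥ p for all y in an interval [a, b] containing [ν* − δ/p, ν* + δ/p]. Then |ν̂ − ν*| ≤ δ/p. -/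
/-!
Since `G` is differentiable, hence continuous, at its quantile `ν*`, it solves `G ν* = 1 - α`
exactly. The mean value inequality with slope `p` then gives `G (ν* + δ/p) ≥ 1 - α + δ`, so `Ĝ`
reaches the level by `ν* + δ/p`, and `G < 1 - α - δ` strictly to the left of `ν* - δ/p`, so the
monotone `Ĝ` stays below the level there. Left of `a` nothing is known about `G` directly;
strictness is recovered from `G' a > 0`, which puts values of `G` below `G a` just left of `a`.
-/

open Filter Set Topology

lemma mul_sub_le_sub_of_hasDerivAt_Icc {f f' : ℝ → ℝ} {a b C x y : ℝ}
    (hf : ∀ z ∈ Icc a b, HasDerivAt f (f' z) z) (hC : ∀ z ∈ Icc a b, C ≤ f' z)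
    (hx : x ∈ Icc a b) (hy : y ∈ Icc a b) (hxy : x ≤ y) :
    C * (y - x) ≤ f y - f x := by
  refine (convex_Icc a b).mul_sub_le_image_sub_of_le_deriv
    (fun z hz => (hf z hz).continuousAt.continuousWithinAt)
    (fun z hz => ?_) (fun z hz => ?_) x hx y hy hxy <;>
  rw [interior_Icc] at hz
  · exact (hf z (Ioo_subset_Icc_self hz)).differentiableAt.differentiableWithinAt
  · rw [(hf z (Ioo_subset_Icc_self hz)).deriv]
    exact hC z (Ioo_subset_Icc_self hz)

lemma HasDerivAt.eventually_nhdsLT_lt {f : ℝ → ℝ} {f' x : ℝ} (hf : HasDerivAt f f' x)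
    (hf' : 0 < f') : ∀ᶠ y in 𝓝[<] x, f y < f x := by
  have hslope : ∀ᶠ y in 𝓝[≠] x, 0 < slope f x y :=
    (hasDerivAt_iff_tendsto_slope.mp hf).eventually (eventually_gt_nhds hf')
  filter_upwards [nhdsLT_le_nhdsNE x hslope, self_mem_nhdsWithin] with y hy hyx
  exact (slope_pos_iff_gt hyx).mp hy

lemma exists_ge_lt_of_hasDerivAt_Icc {f f' : ℝ → ℝ} {a b p c y : ℝ} (hp : 0 < p)
    (hf : ∀ z ∈ Icc a b, HasDerivAt f (f' z) z) (hpf : ∀ z ∈ Icc a b, p ≤ f' z)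
    (hc : c ∈ Icc a b) (hyc : y < c) : ∃ t, y ≤ t ∧ f t < f c := by
  have ha : a ∈ Icc a b := ⟨le_rfl, hc.1.trans hc.2⟩
  rcases le_or_gt a y with hay | hya
  · have := mul_sub_le_sub_of_hasDerivAt_Icc hf hpf ⟨hay, hyc.le.trans hc.2⟩ hc hyc.le
    exact ⟨y, le_rfl, by nlinarith⟩
  · have hfac : f a ≤ f c := by
      have := mul_sub_le_sub_of_hasDerivAt_Icc hf hpf ha hc hc.1
      nlinarith [hc.1]
    obtain ⟨t, hta, htI⟩ := (((hf a ha).eventually_nhdsLT_lt (hp.trans_le (hpf a ha))).and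
      (Ioo_mem_nhdsLT hya)).exists
    exact ⟨t, htI.1.le, hta.trans_le hfac⟩

section Quantile

variable {G : ℝ → ℝ} {q : ℝ}

lemma le_map_csInf_superlevel (hG : ContinuousAt G (sInf {y | q ≤ G y}))
    (hne : {y | q ≤ G y}.Nonempty) (hbdd : BddBelow {y | q ≤ G y}) :
    q ≤ G (sInf {y | q ≤ G y}) :=
  ContinuousWithinAt.closure_le (csInf_mem_closure hne hbdd) continuousWithinAt_const
    hG.continuousWithinAt fun _ hy => hy

lemma map_csInf_superlevel_le (hG : ContinuousAt G (sInf {y | q ≤ G y}))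
    (hbdd : BddBelow {y | q ≤ G y}) :
    G (sInf {y | q ≤ G y}) ≤ q :=
  ContinuousWithinAt.closure_le (s := Iio _) (by rw [closure_Iio]; exact self_mem_Iic)
    hG.continuousWithinAt continuousWithinAt_const fun _ hy => le_of_lt <| not_le.mp fun hqy =>
      (csInf_le hbdd hqy).not_gt hy

lemma map_csInf_superlevel_eq (hG : ContinuousAt G (sInf {y | q ≤ G y}))
    (hne : {y | q ≤ G y}.Nonempty) (hbdd : BddBelow {y | q ≤ G y}) :
    G (sInf {y | q ≤ G y}) = q :=
  (map_csInf_superlevel_le hG hbdd).antisymm (le_map_csInf_superlevel hG hne hbdd)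

end Quantile

theorem quantile_stability_of_cdf_perturbation_general
    (G Ghat : ℝ → ℝ) (hGhatmono : Monotone Ghat)
    (α : ℝ)
    (δ : ℝ) (hδ : 0 ≤ δ) (p : ℝ) (hp : 0 < p)
    (νs νh : ℝ)
    (hνs : νs = sInf {y : ℝ | 1 - α ≤ G y})
    (hνh : νh = sInf {y : ℝ | 1 - α ≤ Ghat y})
    (hGne : {y : ℝ | 1 - α ≤ G y}.Nonempty)
    (hGbdd : BddBelow {y : ℝ | 1 - α ≤ G y})
    (hGhne : {y : ℝ | 1 - α ≤ Ghat y}.Nonempty)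
    (hGhbdd : BddBelow {y : ℝ | 1 - α ≤ Ghat y})
    (hclose : ∀ y : ℝ, |Ghat y - G y| ≤ δ)
    (a b : ℝ) (hab : Set.Icc (νs - δ / p) (νs + δ / p) ⊆ Set.Icc a b)
    (G' : ℝ → ℝ)
    (hderiv : ∀ y ∈ Set.Icc a b, HasDerivAt G (G' y) y)
    (hG'p : ∀ y ∈ Set.Icc a b, p ≤ G' y) :
    |νh - νs| ≤ δ / p := by
  have hdp : 0 ≤ δ / p := div_nonneg hδ hp.le
  have hpdp : p * (δ / p) = δ := mul_div_cancel₀ δ hp.ne'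
  have hlo : νs - δ / p ∈ Icc a b := hab ⟨le_rfl, by linarith⟩
  have hmid : νs ∈ Icc a b := hab ⟨by linarith, by linarith⟩
  have hhi : νs + δ / p ∈ Icc a b := hab ⟨by linarith, le_rfl⟩
  have hGνs : G νs = 1 - α := by
    subst hνs
    exact map_csInf_superlevel_eq (hderiv _ hmid).continuousAt hGne hGbdd
  have hGhi : G νs + δ ≤ G (νs + δ / p) := by
    have := mul_sub_le_sub_of_hasDerivAt_Icc hderiv hG'p hmid hhi (by linarith)
    rw [add_sub_cancel_left, hpdp] at this
    linarith
  have hGlo : G (νs - δ / p) + δ ≤ G νs := by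
    have := mul_sub_le_sub_of_hasDerivAt_Icc hderiv hG'p hlo hmid (by linarith)
    rw [sub_sub_cancel, hpdp] at this
    linarith
  have hupper : νh ≤ νs + δ / p := by
    have hreach : 1 - α ≤ Ghat (νs + δ / p) := by
      linarith [(abs_le.mp (hclose (νs + δ / p))).1]
    exact hνh ▸ csInf_le hGhbdd hreach
  have hlower : νs - δ / p ≤ νh := by
    refine hνh ▸ le_csInf hGhne fun y hy => not_lt.mp fun hy_lt => ?_
    obtain ⟨t, hyt, hGt⟩ := exists_ge_lt_of_hasDerivAt_Icc hp hderiv hG'p hlo hy_lt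
    have : Ghat y ≤ Ghat t := hGhatmono hyt
    linarith [(abs_le.mp (hclose t)).2, show 1 - α ≤ Ghat y from hy]
  exact abs_le.mpr ⟨by linarith, by linarith⟩

/-- Deterministic quantile stability under CDF perturbation: if `Ĝ` is uniformly within `δ`
of `G`, `G` is continuous and has derivative at least `p > 0` on an interval `[a, b]`
containing `[ν* − δ/p, ν* + δ/p]`, then the `1 − α` quantiles of `G` and `Ĝ` differ by at
most `δ/p`. -/
theorem quantile_stability_of_cdf_perturbation
    (G Ghat : ℝ → ℝ) (hGmono : Monotone G) (hGhatmono : Monotone Ghat)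
    (α : ℝ) (hα : α ∈ Set.Ioo (0 : ℝ) 1)
    (δ : ℝ) (hδ : 0 ≤ δ) (p : ℝ) (hp : 0 < p)
    (νs νh : ℝ)
    (hνs : νs = sInf {y : ℝ | 1 - α ≤ G y})
    (hνh : νh = sInf {y : ℝ | 1 - α ≤ Ghat y})
    (hGne : {y : ℝ | 1 - α ≤ G y}.Nonempty)
    (hGbdd : BddBelow {y : ℝ | 1 - α ≤ G y})
    (hGhne : {y : ℝ | 1 - α ≤ Ghat y}.Nonempty)
    (hGhbdd : BddBelow {y : ℝ | 1 - α ≤ Ghat y})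
    (hclose : ∀ y : ℝ, |Ghat y - G y| ≤ δ)
    (hGcont : Continuous G)
    (a b : ℝ) (hab : Set.Icc (νs - δ / p) (νs + δ / p) ⊆ Set.Icc a b)
    (G' : ℝ → ℝ)
    (hderiv : ∀ y ∈ Set.Icc a b, HasDerivAt G (G' y) y)
    (hG'p : ∀ y ∈ Set.Icc a b, p ≤ G' y) :
    |νh - νs| ≤ δ / p :=
  quantile_stability_of_cdf_perturbation_general G Ghat hGhatmono α δ hδ p hp νs νh hνs hνh hGne
    hGbdd hGhne hGhbdd hclose a b hab G' hderiv hG'p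
end

section
/- Concentration of the empirical Value at Risk (Lemma 3): let (Ω, P) be a probability space and Y₁, …, Y_n : Ω → ℝ independent random variables, each with the same law μ, a Borel probability measure on ℝ supported in an interval [a, b] whose cumulative distribution function G is continuously differentiable on [a, b] with G′(y) ≥ p̲ > 0 for all y ∈ [a, b]. Fix α ∈ (0,1) and let ν* = inf{ y : G(y) ≥ 1 − α }. For ω ∈ Ω, define the empirical CDF Ĝ_n(y)(ω) = (1/n)·#{ k ≤ n : Y_k(ω) ≤ y } and the empirical VaR ν̂_n(ω) = inf{ y : Ĝ_n(y)(ω) ≥ 1 − α }. Then for every ε > 0, P( |ν̂_n − ν*| > ε ) ≤ 2·exp(−2·n·ε²·p̲²). -/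
/-!
On `[a, b]` the CDF `G` rises with slope at least `p`, so `G (ν* + ε) ≥ 1 - α + p ε` and
`G (ν* - ε) ≤ 1 - α - p ε` whenever these points lie in `[a, b]`. Hence `ν̂ₙ > ν* + ε` forces the
empirical CDF at `ν* + ε` to fall `p ε` below `G`, and `ν̂ₙ < ν* - ε` forces it to exceed `G` by
`p ε` at `ν* - ε`. Each of these is a deviation of a mean of `n` independent indicators, of
probability at most `exp (-2 n p² ε²)` by Hoeffding's inequality at a single point, so no uniform
(DKW) bound is needed. The samples, and with them `ν̂ₙ`, lie in `[a, b]` almost surely, which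
rules out the cases where `ν* ± ε` falls outside `[a, b]`.
-/

open MeasureTheory ProbabilityTheory Real Set

section Hoeffding

variable {Ω : Type*} [MeasurableSpace Ω] {P : Measure Ω} [IsProbabilityMeasure P]

lemma measure_sum_sub_integral_ge_le {ι : Type*} [Fintype ι] {X : ι → Ω → ℝ}
    (hindep : iIndepFun X P) (hmeas : ∀ i, AEMeasurable (X i) P) {c d : ℝ}
    (hX : ∀ i, ∀ᵐ ω ∂P, X i ω ∈ Icc c d) {t : ℝ} (ht : 0 ≤ t) :
    P {ω | Fintype.card ι * t ≤ ∑ i, (X i ω - P[X i])}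
      ≤ ENNReal.ofReal (exp (-2 * Fintype.card ι * t ^ 2 / (d - c) ^ 2)) := by
  have hcentered : iIndepFun (fun i ω ↦ X i ω - P[X i]) P :=
    hindep.comp (fun i (y : ℝ) ↦ y - ∫ ω, X i ω ∂P) fun _ ↦ measurable_id.sub_const _
  have hoeffding := HasSubgaussianMGF.measure_sum_ge_le_of_iIndepFun hcentered
    (fun i _ ↦ hasSubgaussianMGF_of_mem_Icc (hmeas i) (hX i)) (s := Finset.univ)
    (ε := Fintype.card ι * t) (by positivity)
  rw [← ofReal_measureReal]
  refine ENNReal.ofReal_le_ofReal (hoeffding.trans_eq (congrArg exp ?_))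
  rcases Nat.eq_zero_or_pos (Fintype.card ι) with h | h
  · simp [h]
  · simp only [Finset.sum_const, Finset.card_univ, nsmul_eq_mul, NNReal.coe_mul,
      NNReal.coe_natCast, NNReal.coe_pow, NNReal.coe_div, coe_nnnorm, Real.norm_eq_abs,
      NNReal.coe_ofNat]
    rw [div_pow, sq_abs]
    rcases eq_or_ne (d - c) 0 with hdc | hdc
    · simp [hdc]
    · field_simp

end Hoeffding

/-- `lowerQuantile G (1 - α)` is the paper's `VaR_α`. -/
noncomputable def lowerQuantile (F : ℝ → ℝ) (q : ℝ) : ℝ := sInf {y | q ≤ F y}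

section LowerQuantile

variable {F : ℝ → ℝ} {q a b y : ℝ}

lemma le_of_forall_lt_of_le (hlow : ∀ y < a, F y < q) (hy : q ≤ F y) : a ≤ y :=
  not_lt.1 fun h ↦ (hlow y h).not_ge hy

lemma lowerQuantile_le (hlow : ∀ y < a, F y < q) (hy : q ≤ F y) : lowerQuantile F q ≤ y :=
  csInf_le ⟨a, fun _ ↦ le_of_forall_lt_of_le hlow⟩ hy

lemma lt_of_lt_lowerQuantile (hlow : ∀ y < a, F y < q) (hy : y < lowerQuantile F q) : F y < q :=
  not_le.1 fun h ↦ (lowerQuantile_le hlow h).not_gt hy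

lemma le_of_lowerQuantile_lt (hF : Monotone F) (hb : q ≤ F b) (hy : lowerQuantile F q < y) :
    q ≤ F y := by
  obtain ⟨z, hz, hzy⟩ := exists_lt_of_csInf_lt ⟨b, hb⟩ hy
  exact hz.trans (hF hzy.le)

lemma lowerQuantile_mem_Icc (hlow : ∀ y < a, F y < q) (hb : q ≤ F b) :
    lowerQuantile F q ∈ Icc a b :=
  ⟨le_csInf ⟨b, hb⟩ fun _ ↦ le_of_forall_lt_of_le hlow, lowerQuantile_le hlow hb⟩

lemma add_mul_sub_lowerQuantile_le {p : ℝ} (hp : 0 < p)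
    (hgrowth : ∀ u ∈ Icc a b, ∀ v ∈ Icc a b, u ≤ v → p * (v - u) ≤ F v - F u)
    (hlow : ∀ y < a, F y < q) (hb : q ≤ F b) (hy : lowerQuantile F q < y) (hyb : y ≤ b) :
    q + p * (y - lowerQuantile F q) ≤ F y := by
  by_contra! h
  -- the line of slope `p` ending at `(y, F y)` is at height `q` over `z₀`
  set z₀ := y - (F y - q) / p
  have hz₀ : lowerQuantile F q < min y z₀ :=
    lt_min hy (by rw [lt_sub_comm, div_lt_iff₀ hp]; linarith)
  obtain ⟨z, hz, hzlt⟩ := exists_lt_of_csInf_lt ⟨b, hb⟩ hz₀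
  have haz : a ≤ z := le_of_forall_lt_of_le hlow hz
  have hzy : z < y := hzlt.trans_le (min_le_left _ _)
  have hgap : F y - q < p * (y - z) := by
    rw [← div_lt_iff₀' hp]; linarith [hzlt.trans_le (min_le_right _ _)]
  linarith [hgrowth z ⟨haz, hzy.le.trans hyb⟩ y ⟨haz.trans hzy.le, hyb⟩ hzy.le, hz.out]

lemma add_mul_lowerQuantile_sub_le {p : ℝ} (hp : 0 < p)
    (hgrowth : ∀ u ∈ Icc a b, ∀ v ∈ Icc a b, u ≤ v → p * (v - u) ≤ F v - F u)
    (hlow : ∀ y < a, F y < q) (hb : q ≤ F b) (hay : a ≤ y) (hy : y < lowerQuantile F q) :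
    F y + p * (lowerQuantile F q - y) ≤ q := by
  by_contra! h
  have hFy := lt_of_lt_lowerQuantile hlow hy
  -- the line of slope `p` starting at `(y, F y)` reaches height `q` over `z₀`
  set z₀ := y + (q - F y) / p
  have hyz₀ : y ≤ z₀ := le_add_of_nonneg_right (div_nonneg (by linarith) hp.le)
  have hz₀ : z₀ < lowerQuantile F q := by
    rw [← lt_sub_iff_add_lt', div_lt_iff₀ hp]; linarith
  have hz₀b : z₀ ≤ b := hz₀.le.trans (lowerQuantile_mem_Icc hlow hb).2
  have hgrowth_z₀ := hgrowth y ⟨hay, hyz₀.trans hz₀b⟩ z₀ ⟨hay.trans hyz₀, hz₀b⟩ hyz₀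
  have hqz₀ : q ≤ F z₀ := by
    rw [show z₀ - y = (q - F y) / p by ring, mul_div_cancel₀ _ hp.ne'] at hgrowth_z₀
    linarith
  exact (lowerQuantile_le hlow hqz₀).not_gt hz₀

end LowerQuantile

noncomputable def empiricalCDF {n : ℕ} (x : Fin n → ℝ) (y : ℝ) : ℝ :=
  (n : ℝ)⁻¹ * ∑ k, if x k ≤ y then 1 else 0

section EmpiricalCDF

variable {n : ℕ} {x : Fin n → ℝ} {a b q y : ℝ}

lemma natCast_mul_empiricalCDF : n * empiricalCDF x y = ∑ k, if x k ≤ y then 1 else 0 := by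
  rcases Nat.eq_zero_or_pos n with rfl | hn
  · simp
  · rw [empiricalCDF, mul_inv_cancel_left₀ (by positivity)]

lemma empiricalCDF_mono : Monotone (empiricalCDF x) := fun y z hyz ↦ by
  unfold empiricalCDF
  gcongr with k
  split_ifs with hy hz
  exacts [le_rfl, absurd (hy.trans hyz) hz, zero_le_one, le_rfl]

lemma empiricalCDF_lt_of_lt (hq : 0 < q) (hx : ∀ k, a ≤ x k) (hy : y < a) :
    empiricalCDF x y < q := by
  have hterm : ∀ k, (if x k ≤ y then (1 : ℝ) else 0) = 0 := fun k ↦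
    if_neg (hy.trans_le (hx k)).not_ge
  simpa [empiricalCDF, hterm] using hq

lemma le_empiricalCDF_of_forall_le (hn : 0 < n) (hq : q ≤ 1) (hx : ∀ k, x k ≤ b) :
    q ≤ empiricalCDF x b := by
  have hterm : ∀ k, (if x k ≤ b then (1 : ℝ) else 0) = 1 := fun k ↦ if_pos (hx k)
  simp only [empiricalCDF, hterm, Finset.sum_const, Finset.card_univ, Fintype.card_fin,
    nsmul_eq_mul, mul_one]
  rwa [inv_mul_cancel₀ (by positivity)]

end EmpiricalCDF

section Deviation

variable {n : ℕ} {x : Fin n → ℝ} {G : ℝ → ℝ} {a b p q ε : ℝ}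

lemma empiricalCDF_le_sub_of_add_lt_lowerQuantile (hn : 0 < n) (hx : ∀ k, x k ∈ Icc a b)
    (hq : q ∈ Ioc 0 1) (hp : 0 < p)
    (hgrowth : ∀ u ∈ Icc a b, ∀ v ∈ Icc a b, u ≤ v → p * (v - u) ≤ G v - G u)
    (hGlow : ∀ y < a, G y < q) (hGb : q ≤ G b) (hε : 0 < ε)
    (h : lowerQuantile G q + ε < lowerQuantile (empiricalCDF x) q) :
    empiricalCDF x (lowerQuantile G q + ε) ≤ G (lowerQuantile G q + ε) - p * ε := by
  have hlow : ∀ y < a, empiricalCDF x y < q :=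
    fun _ ↦ empiricalCDF_lt_of_lt hq.1 fun k ↦ (hx k).1
  have hb : lowerQuantile G q + ε ≤ b := h.le.trans
    (lowerQuantile_mem_Icc hlow (le_empiricalCDF_of_forall_le hn hq.2 fun k ↦ (hx k).2)).2
  have hgap := add_mul_sub_lowerQuantile_le hp hgrowth hGlow hGb (lt_add_of_pos_right _ hε) hb
  rw [add_sub_cancel_left] at hgap
  linarith [lt_of_lt_lowerQuantile hlow h]

lemma add_le_empiricalCDF_of_lowerQuantile_lt_sub (hn : 0 < n) (hx : ∀ k, x k ∈ Icc a b)
    (hq : q ∈ Ioc 0 1) (hp : 0 < p)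
    (hgrowth : ∀ u ∈ Icc a b, ∀ v ∈ Icc a b, u ≤ v → p * (v - u) ≤ G v - G u)
    (hGlow : ∀ y < a, G y < q) (hGb : q ≤ G b) (hε : 0 < ε)
    (h : lowerQuantile (empiricalCDF x) q < lowerQuantile G q - ε) :
    G (lowerQuantile G q - ε) + p * ε ≤ empiricalCDF x (lowerQuantile G q - ε) := by
  have hbx := le_empiricalCDF_of_forall_le hn hq.2 fun k ↦ (hx k).2
  have ha : a ≤ lowerQuantile G q - ε := (lowerQuantile_mem_Icc
    (fun _ ↦ empiricalCDF_lt_of_lt hq.1 fun k ↦ (hx k).1) hbx).1.trans h.le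
  have hgap := add_mul_lowerQuantile_sub_le hp hgrowth hGlow hGb ha (sub_lt_self _ hε)
  rw [sub_sub_cancel] at hgap
  linarith [le_of_lowerQuantile_lt empiricalCDF_mono hbx h]

end Deviation

lemma mul_sub_le_sub_of_hasDerivWithinAt_Icc {G G' : ℝ → ℝ} {a b p : ℝ}
    (hderiv : ∀ y ∈ Icc a b, HasDerivWithinAt G (G' y) (Icc a b) y)
    (hG'p : ∀ y ∈ Icc a b, p ≤ G' y) :
    ∀ u ∈ Icc a b, ∀ v ∈ Icc a b, u ≤ v → p * (v - u) ≤ G v - G u := by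
  have hderivAt : ∀ y ∈ interior (Icc a b), HasDerivAt G (G' y) y := fun y hy ↦
    (hderiv y (interior_subset hy)).hasDerivAt (mem_interior_iff_mem_nhds.1 hy)
  refine (convex_Icc a b).mul_sub_le_image_sub_of_le_deriv
    (fun y hy ↦ (hderiv y hy).continuousWithinAt)
    (fun y hy ↦ (hderivAt y hy).differentiableAt.differentiableWithinAt) fun y hy ↦ ?_
  rw [(hderivAt y hy).deriv]
  exact hG'p y (interior_subset hy)

section Support

variable {μ : Measure ℝ} [IsProbabilityMeasure μ] {a b : ℝ}

lemma measureReal_Iic_eq_zero_of_lt {y : ℝ} (hsupp : μ (Icc a b) = 1) (hy : y < a) :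
    μ.real (Iic y) = 0 := by
  refine (measureReal_eq_zero_iff).2 (measure_mono_null (fun z hz ↦ ?_)
    ((prob_compl_eq_zero_iff measurableSet_Icc).2 hsupp))
  exact fun hz' ↦ (hz.out.trans_lt hy).not_ge hz'.1

lemma measureReal_Iic_eq_one (hsupp : μ (Icc a b) = 1) : μ.real (Iic b) = 1 := by
  rw [measureReal_def, le_antisymm prob_le_one (hsupp ▸ measure_mono Icc_subset_Iic_self),
    ENNReal.toReal_one]

end Support

section Sample

variable {Ω : Type*} [MeasurableSpace Ω] {P : Measure Ω} {μ : Measure ℝ}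

lemma ae_forall_mem_of_map_eq [IsProbabilityMeasure μ] {n : ℕ} {Y : Fin n → Ω → ℝ} {s : Set ℝ}
    (hmeas : ∀ k, Measurable (Y k)) (hlaw : ∀ k, P.map (Y k) = μ) (hs : MeasurableSet s)
    (hμs : μ s = 1) : ∀ᵐ ω ∂P, ∀ k, Y k ω ∈ s := by
  refine ae_all_iff.2 fun k ↦ ae_of_ae_map (hmeas k).aemeasurable ?_
  rw [hlaw k]
  exact mem_ae_iff.2 ((prob_compl_eq_zero_iff hs).2 hμs)

lemma integral_ite_le {Y : Ω → ℝ} (hY : Measurable Y) (hlaw : P.map Y = μ) (y : ℝ) :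
    ∫ ω, (if Y ω ≤ y then (1 : ℝ) else 0) ∂P = μ.real (Iic y) := by
  rw [← hlaw, map_measureReal_apply hY measurableSet_Iic, ← integral_indicator_one
    (hY measurableSet_Iic)]
  rfl

lemma measure_add_le_empiricalCDF_le [IsProbabilityMeasure P] {n : ℕ} {Y : Fin n → Ω → ℝ}
    (hmeas : ∀ k, Measurable (Y k)) (hindep : iIndepFun Y P) (hlaw : ∀ k, P.map (Y k) = μ)
    (y : ℝ) {t : ℝ} (ht : 0 ≤ t) :
    P {ω | μ.real (Iic y) + t ≤ empiricalCDF (fun k ↦ Y k ω) y}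
      ≤ ENNReal.ofReal (exp (-2 * n * t ^ 2)) := by
  have hind : Measurable fun z : ℝ ↦ if z ≤ y then (1 : ℝ) else 0 :=
    measurable_const.ite measurableSet_Iic measurable_const
  have hmean k := integral_ite_le (hmeas k) (hlaw k) y
  have hoeffding := measure_sum_sub_integral_ge_le (c := 0) (d := 1)
    (hindep.comp _ fun _ ↦ hind) (fun k ↦ (hind.comp (hmeas k)).aemeasurable)
    (fun k ↦ ae_of_all _ fun ω ↦ by dsimp only [Function.comp_apply]; split_ifs <;> simp) ht
  simp only [Function.comp_apply, hmean, Fintype.card_fin, sub_zero, one_pow, div_one]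
    at hoeffding
  refine (measure_mono fun ω hω ↦ ?_).trans hoeffding
  have := mul_le_mul_of_nonneg_left hω.out (Nat.cast_nonneg (α := ℝ) n)
  rw [natCast_mul_empiricalCDF] at this
  simp only [Set.mem_ofPred_eq, Finset.sum_sub_distrib, Finset.sum_const, Finset.card_univ,
    Fintype.card_fin, nsmul_eq_mul]
  linarith

lemma measure_empiricalCDF_le_sub_le [IsProbabilityMeasure P] {n : ℕ} {Y : Fin n → Ω → ℝ}
    (hmeas : ∀ k, Measurable (Y k)) (hindep : iIndepFun Y P) (hlaw : ∀ k, P.map (Y k) = μ)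
    (y : ℝ) {t : ℝ} (ht : 0 ≤ t) :
    P {ω | empiricalCDF (fun k ↦ Y k ω) y ≤ μ.real (Iic y) - t}
      ≤ ENNReal.ofReal (exp (-2 * n * t ^ 2)) := by
  have hind : Measurable fun z : ℝ ↦ -if z ≤ y then (1 : ℝ) else 0 :=
    (measurable_const.ite measurableSet_Iic measurable_const).neg
  have hmean k : ∫ ω, -(if Y k ω ≤ y then (1 : ℝ) else 0) ∂P = -μ.real (Iic y) := by
    rw [integral_neg, integral_ite_le (hmeas k) (hlaw k) y]
  have hoeffding := measure_sum_sub_integral_ge_le (c := -1) (d := 0)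
    (hindep.comp _ fun _ ↦ hind) (fun k ↦ (hind.comp (hmeas k)).aemeasurable)
    (fun k ↦ ae_of_all _ fun ω ↦ by dsimp only [Function.comp_apply]; split_ifs <;> simp) ht
  simp only [Function.comp_apply, hmean, Fintype.card_fin, sub_neg_eq_add, zero_add, one_pow,
    div_one] at hoeffding
  refine (measure_mono fun ω hω ↦ ?_).trans hoeffding
  have := mul_le_mul_of_nonneg_left hω.out (Nat.cast_nonneg (α := ℝ) n)
  rw [natCast_mul_empiricalCDF] at this
  simp only [Set.mem_ofPred_eq, neg_add_eq_sub, Finset.sum_sub_distrib, Finset.sum_const,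
    Finset.card_univ, Fintype.card_fin, nsmul_eq_mul]
  linarith

end Sample

theorem empirical_var_concentration_general
    {Ω : Type*} [MeasurableSpace Ω] (P : Measure Ω) [IsProbabilityMeasure P]
    (n : ℕ) (hn : 0 < n) (Y : Fin n → Ω → ℝ)
    (hmeas : ∀ k, Measurable (Y k))
    (hindep : ProbabilityTheory.iIndepFun Y P)
    (μ : Measure ℝ) [IsProbabilityMeasure μ]
    (hlaw : ∀ k, Measure.map (Y k) P = μ)
    (a b : ℝ) (hsupp : μ (Set.Icc a b) = 1)
    (G : ℝ → ℝ) (hG : ∀ y, G y = (μ (Set.Iic y)).toReal)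
    (G' : ℝ → ℝ)
    (hderiv : ∀ y ∈ Set.Icc a b, HasDerivWithinAt G (G' y) (Set.Icc a b) y)
    (p : ℝ) (hp : 0 < p) (hG'p : ∀ y ∈ Set.Icc a b, p ≤ G' y)
    (α : ℝ) (hα : α ∈ Set.Ioo (0 : ℝ) 1)
    (νs : ℝ) (hνs : νs = sInf {y : ℝ | 1 - α ≤ G y})
    (ε : ℝ) (hε : 0 < ε) :
    P {ω | ε < |sInf {y : ℝ |
          1 - α ≤ (n : ℝ)⁻¹ * ∑ k : Fin n, (if Y k ω ≤ y then (1 : ℝ) else 0)} - νs|}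
      ≤ ENNReal.ofReal (2 * Real.exp (-2 * n * ε ^ 2 * p ^ 2)) := by
  obtain rfl : G = fun y ↦ μ.real (Iic y) := funext hG
  have hq : 1 - α ∈ Ioc 0 1 := ⟨sub_pos.2 hα.2, sub_le_self _ hα.1.le⟩
  have hGlow : ∀ y < a, μ.real (Iic y) < 1 - α := fun _ hy ↦
    (measureReal_Iic_eq_zero_of_lt hsupp hy).trans_lt hq.1
  have hGb : 1 - α ≤ μ.real (Iic b) := hq.2.trans_eq (measureReal_Iic_eq_one hsupp).symm
  have hgrowth := mul_sub_le_sub_of_hasDerivWithinAt_Icc hderiv hG'p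
  have hsample := ae_forall_mem_of_map_eq hmeas hlaw measurableSet_Icc hsupp
  set ν := lowerQuantile (fun y ↦ μ.real (Iic y)) (1 - α)
  set V : Ω → ℝ := fun ω ↦ lowerQuantile (empiricalCDF fun k ↦ Y k ω) (1 - α)
  change P {ω | ε < |V ω - νs|} ≤ _
  subst hνs
  calc P {ω | ε < |V ω - ν|} ≤ P ({ω | ν + ε < V ω} ∪ {ω | V ω < ν - ε}) :=
        measure_mono fun ω hω ↦ (lt_abs.1 hω.out).imp (fun h ↦ show ν + ε < V ω by linarith)
          fun h ↦ show V ω < ν - ε by linarith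
    _ ≤ P {ω | ν + ε < V ω} + P {ω | V ω < ν - ε} := measure_union_le _ _
    _ ≤ P {ω | empiricalCDF (fun k ↦ Y k ω) (ν + ε) ≤ μ.real (Iic (ν + ε)) - p * ε}
          + P {ω | μ.real (Iic (ν - ε)) + p * ε ≤ empiricalCDF (fun k ↦ Y k ω) (ν - ε)} :=
        add_le_add
          (measure_mono_ae (hsample.mono fun ω hω ↦ empiricalCDF_le_sub_of_add_lt_lowerQuantile
            hn hω hq hp hgrowth hGlow hGb hε))
          (measure_mono_ae (hsample.mono fun ω hω ↦ add_le_empiricalCDF_of_lowerQuantile_lt_sub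
            hn hω hq hp hgrowth hGlow hGb hε))
    _ ≤ ENNReal.ofReal (exp (-2 * n * (p * ε) ^ 2))
          + ENNReal.ofReal (exp (-2 * n * (p * ε) ^ 2)) :=
        add_le_add (measure_empiricalCDF_le_sub_le hmeas hindep hlaw _ (by positivity))
          (measure_add_le_empiricalCDF_le hmeas hindep hlaw _ (by positivity))
    _ = ENNReal.ofReal (2 * exp (-2 * n * ε ^ 2 * p ^ 2)) := by
        rw [← ENNReal.ofReal_add (by positivity) (by positivity), ← two_mul]
        ring_nf

/-- Concentration of the empirical Value at Risk (Lemma 3): for `n` i.i.d. samples of a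
distribution supported in `[a, b]` whose CDF is continuously differentiable there with
density bounded below by `p̲ > 0`, the empirical `1 − α` quantile deviates from the true
Value at Risk by more than `ε` with probability at most `2 exp(−2 n ε² p̲²)`. -/
theorem empirical_var_concentration
    {Ω : Type*} [MeasurableSpace Ω] (P : Measure Ω) [IsProbabilityMeasure P]
    (n : ℕ) (hn : 0 < n) (Y : Fin n → Ω → ℝ)
    (hmeas : ∀ k, Measurable (Y k))
    (hindep : ProbabilityTheory.iIndepFun Y P)
    (μ : Measure ℝ) [IsProbabilityMeasure μ]
    (hlaw : ∀ k, Measure.map (Y k) P = μ)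
    (a b : ℝ) (hab : a ≤ b) (hsupp : μ (Set.Icc a b) = 1)
    (G : ℝ → ℝ) (hG : ∀ y, G y = (μ (Set.Iic y)).toReal)
    (G' : ℝ → ℝ)
    (hderiv : ∀ y ∈ Set.Icc a b, HasDerivWithinAt G (G' y) (Set.Icc a b) y)
    (hG'cont : ContinuousOn G' (Set.Icc a b))
    (p : ℝ) (hp : 0 < p) (hG'p : ∀ y ∈ Set.Icc a b, p ≤ G' y)
    (α : ℝ) (hα : α ∈ Set.Ioo (0 : ℝ) 1)
    (νs : ℝ) (hνs : νs = sInf {y : ℝ | 1 - α ≤ G y})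
    (ε : ℝ) (hε : 0 < ε) :
    P {ω | ε < |sInf {y : ℝ |
          1 - α ≤ (n : ℝ)⁻¹ * ∑ k : Fin n, (if Y k ω ≤ y then (1 : ℝ) else 0)} - νs|}
      ≤ ENNReal.ofReal (2 * Real.exp (-2 * n * ε ^ 2 * p ^ 2)) :=
  empirical_var_concentration_general P n hn Y hmeas hindep μ hlaw a b hsupp G hG G' hderiv p hp
    hG'p α hα νs hνs ε hε
end

section
/- Lipschitz bound on the CVaR-gradient bias in the VaR estimate (inequality (FO:ineq:1), first part): let (Ω, P) be a probability space, E a real normed vector space, Z : Ω → ℝ a random variable whose cumulative distribution function F is L-Lipschitz on ℝ, X : Ω → E a Bochner-integrable random vector with ‖X(ω)‖ ≤ B almost surely, and α ∈ (0,1]. Then for all ν, ν′ ∈ ℝ, ‖ α⁻¹·E[ 1{Z ≥ ν}·X ] − α⁻¹·E[ 1{Z ≥ ν′}·X ] ‖ ≤ (B·L/α)·|ν − ν′|, where 1{·} denotes the indicator function. -/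
/-!
Replacing the threshold `ν'` by `ν` changes the integrand `1{Z ≥ ν} X` only on the slab between
the two thresholds, where it has norm at most `B`; so the two expectations differ by at most `B`
times the probability of the slab. Since the CDF of `Z` is continuous, that probability is the
increment of the CDF between `ν` and `ν'`, which is at most `L |ν - ν'|`.
-/

open MeasureTheory ProbabilityTheory Set
open scoped symmDiff

theorem MeasureTheory.norm_integral_indicator_sub_le {Ω E : Type*} [MeasurableSpace Ω]
    {μ : Measure Ω} [IsFiniteMeasure μ] [NormedAddCommGroup E] [NormedSpace ℝ E]
    {X : Ω → E} (hX : Integrable X μ) {B : ℝ} (hB : ∀ᵐ ω ∂μ, ‖X ω‖ ≤ B)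
    {s t : Set Ω} (hs : MeasurableSet s) (ht : MeasurableSet t) :
    ‖∫ ω, s.indicator X ω ∂μ - ∫ ω, t.indicator X ω ∂μ‖ ≤ B * μ.real (s ∆ t) := by
  have hst : MeasurableSet (s ∆ t) := hs.symmDiff ht
  rw [← integral_sub (hX.indicator hs) (hX.indicator ht), mul_comm, ← smul_eq_mul,
    ← integral_indicator_const B hst]
  refine norm_integral_le_of_norm_le ((integrable_const B).indicator hst) ?_
  filter_upwards [hB] with ω hω
  by_cases hωs : ω ∈ s <;> by_cases hωt : ω ∈ t <;>
    simp [Set.indicator, hωs, hωt, Set.mem_symmDiff, hω]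

namespace ProbabilityTheory

variable (μ : Measure ℝ) [IsProbabilityMeasure μ]

theorem measureReal_Ico_eq_cdf_sub {a b : ℝ} (hab : a ≤ b)
    (ha : ContinuousAt (cdf μ) a) (hb : ContinuousAt (cdf μ) b) :
    μ.real (Ico a b) = cdf μ b - cdf μ a := by
  conv_lhs => rw [measureReal_def, ← measure_cdf μ]
  rw [StieltjesFunction.measure_Ico, ha.continuousWithinAt.leftLim_eq,
    hb.continuousWithinAt.leftLim_eq, ENNReal.toReal_ofReal (sub_nonneg.2 (monotone_cdf μ hab))]

theorem measureReal_Ici_symmDiff_Ici_le {L : ℝ}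
    (hLip : ∀ y y' : ℝ, |cdf μ y - cdf μ y'| ≤ L * |y - y'|) (a b : ℝ) :
    μ.real (Ici a ∆ Ici b) ≤ L * |a - b| := by
  wlog hab : a ≤ b generalizing a b
  · rw [symmDiff_comm, abs_sub_comm]
    exact this b a (le_of_not_ge hab)
  have hcont : Continuous (cdf μ) :=
    (LipschitzWith.of_dist_le' (f := cdf μ) (K := L) hLip).continuous
  rw [symmDiff_of_ge (Ici_subset_Ici.2 hab), Ici_sdiff_Ici,
    measureReal_Ico_eq_cdf_sub μ hab hcont.continuousAt hcont.continuousAt, abs_sub_comm a b]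
  exact (le_abs_self _).trans (hLip b a)

theorem cdf_map_eq_toReal {Ω : Type*} [MeasurableSpace Ω] (P : Measure Ω) [IsProbabilityMeasure P]
    {Z : Ω → ℝ} (hZ : Measurable Z) (y : ℝ) :
    cdf (P.map Z) y = (P {ω | Z ω ≤ y}).toReal := by
  have := Measure.isProbabilityMeasure_map (μ := P) hZ.aemeasurable
  rw [cdf_eq_real, map_measureReal_apply hZ measurableSet_Iic]
  rfl

end ProbabilityTheory

theorem cvar_gradient_bias_lipschitz_general
    {Ω : Type*} [MeasurableSpace Ω] (P : Measure Ω) [IsProbabilityMeasure P]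
    {E : Type*} [NormedAddCommGroup E] [NormedSpace ℝ E]
    (Z : Ω → ℝ) (hZmeas : Measurable Z)
    (L : ℝ)
    (hLip : ∀ y y' : ℝ,
      |(P {ω | Z ω ≤ y}).toReal - (P {ω | Z ω ≤ y'}).toReal| ≤ L * |y - y'|)
    (X : Ω → E) (hX : Integrable X P)
    (B : ℝ) (hB : ∀ᵐ ω ∂P, ‖X ω‖ ≤ B)
    (α : ℝ) (hα : α ∈ Set.Ioc (0 : ℝ) 1) :
    ∀ ν ν' : ℝ,
      ‖α⁻¹ • ∫ ω, {ω' | ν ≤ Z ω'}.indicator X ω ∂P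
        - α⁻¹ • ∫ ω, {ω' | ν' ≤ Z ω'}.indicator X ω ∂P‖
        ≤ B * L / α * |ν - ν'| := by
  intro ν ν'
  have hα0 : 0 ≤ α⁻¹ := inv_nonneg.2 hα.1.le
  have hB0 : 0 ≤ B := hB.exists.elim fun ω hω ↦ (norm_nonneg _).trans hω
  have := Measure.isProbabilityMeasure_map (μ := P) hZmeas.aemeasurable
  have hZLip : ∀ y y' : ℝ, |cdf (P.map Z) y - cdf (P.map Z) y'| ≤ L * |y - y'| := by
    simpa only [cdf_map_eq_toReal P hZmeas] using hLip
  have hslab : P.real (Z ⁻¹' (Ici ν ∆ Ici ν')) ≤ L * |ν - ν'| := by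
    rw [← map_measureReal_apply hZmeas (measurableSet_Ici.symmDiff measurableSet_Ici)]
    exact measureReal_Ici_symmDiff_Ici_le _ hZLip ν ν'
  calc _ = α⁻¹ * ‖∫ ω, {ω' | ν ≤ Z ω'}.indicator X ω ∂P
          - ∫ ω, {ω' | ν' ≤ Z ω'}.indicator X ω ∂P‖ := by
        rw [← smul_sub, norm_smul, Real.norm_of_nonneg hα0]
    _ ≤ α⁻¹ * (B * (L * |ν - ν'|)) := by
        gcongr
        exact (norm_integral_indicator_sub_le hX hB (measurableSet_le measurable_const hZmeas)
          (measurableSet_le measurable_const hZmeas)).trans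
          (mul_le_mul_of_nonneg_left hslab hB0)
    _ = B * L / α * |ν - ν'| := by ring

/-- Lipschitz bound on the CVaR-gradient bias in the VaR estimate: if the CDF of `Z` is
`L`-Lipschitz and `‖X‖ ≤ B` almost surely, then the map
`ν ↦ α⁻¹ E[1{Z ≥ ν} X]` is `(B L / α)`-Lipschitz. -/
theorem cvar_gradient_bias_lipschitz
    {Ω : Type*} [MeasurableSpace Ω] (P : Measure Ω) [IsProbabilityMeasure P]
    {E : Type*} [NormedAddCommGroup E] [NormedSpace ℝ E] [CompleteSpace E]
    (Z : Ω → ℝ) (hZmeas : Measurable Z)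
    (L : ℝ) (hL : 0 ≤ L)
    (hLip : ∀ y y' : ℝ,
      |(P {ω | Z ω ≤ y}).toReal - (P {ω | Z ω ≤ y'}).toReal| ≤ L * |y - y'|)
    (X : Ω → E) (hX : Integrable X P)
    (B : ℝ) (hB : ∀ᵐ ω ∂P, ‖X ω‖ ≤ B)
    (α : ℝ) (hα : α ∈ Set.Ioc (0 : ℝ) 1) :
    ∀ ν ν' : ℝ,
      ‖α⁻¹ • ∫ ω, {ω' | ν ≤ Z ω'}.indicator X ω ∂P
        - α⁻¹ • ∫ ω, {ω' | ν' ≤ Z ω'}.indicator X ω ∂P‖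
        ≤ B * L / α * |ν - ν'| :=
  cvar_gradient_bias_lipschitz_general P Z hZmeas L hLip X hX B hB α hα
end

section
/- The risk-averse example game has a continuum of Nash equilibria: let a > 0 and b, c ∈ ℝ, and define the two-player costs C₁, C₂ : ℝ × ℝ → ℝ by C₁(x₁, x₂) = c + a·x₁² + 2a·x₁·x₂ − a·b·x₁ and C₂(x₁, x₂) = c + a·x₂² + 2a·x₂·x₁ − a·b·x₂. Then every point (x₁, x₂) ∈ ℝ² with x₁ + x₂ = b/2 is a Nash equilibrium: C₁(x₁, x₂) ≤ C₁(y, x₂) for every y ∈ ℝ and C₂(x₁, x₂) ≤ C₂(x₁, y) for every y ∈ ℝ. In particular, the game has infinitely many Nash equilibria. -/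
/-!
Each player's cost is a convex quadratic in its own action, and
`C₁(y, x₂) - C₁(x₁, x₂) = a (y - x₁) (y + x₁ + 2 x₂ - b)`, which is `a (y - x₁)²` as soon as
`x₁ + x₂ = b / 2`; symmetrically for the second player. Hence every point of that line is a
Nash equilibrium, and the line is infinite.
-/

def IsNashEquilibrium {α β γ : Type*} [LE γ] (C₁ C₂ : α × β → γ) (p : α × β) : Prop :=
  (∀ y, C₁ p ≤ C₁ (y, p.2)) ∧ ∀ y, C₂ p ≤ C₂ (p.1, y)

/-- The cost of a player playing `own` against `other`; player 1 has cost
`riskAverseCost a b c x₁ x₂` and player 2 has cost `riskAverseCost a b c x₂ x₁`. -/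
def riskAverseCost (a b c own other : ℝ) : ℝ :=
  c + a * own ^ 2 + 2 * a * own * other - a * b * own

section RiskAverseCost

variable {a b : ℝ} (c : ℝ) {x z : ℝ}

theorem riskAverseCost_sub_eq_mul_sq (h : x + z = b / 2) (y : ℝ) :
    riskAverseCost a b c y z - riskAverseCost a b c x z = a * (y - x) ^ 2 := by
  obtain rfl : b = 2 * x + 2 * z := by linarith
  unfold riskAverseCost
  ring

theorem riskAverseCost_le_of_add_eq (ha : 0 ≤ a) (h : x + z = b / 2) (y : ℝ) :
    riskAverseCost a b c x z ≤ riskAverseCost a b c y z := by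
  rw [← sub_nonneg, riskAverseCost_sub_eq_mul_sq c h]
  positivity

theorem isNashEquilibrium_riskAverseCost_of_add_eq (ha : 0 ≤ a) {p : ℝ × ℝ}
    (h : p.1 + p.2 = b / 2) :
    IsNashEquilibrium (fun q ↦ riskAverseCost a b c q.1 q.2)
      (fun q ↦ riskAverseCost a b c q.2 q.1) p :=
  ⟨riskAverseCost_le_of_add_eq c ha h, riskAverseCost_le_of_add_eq c ha (by linarith)⟩

end RiskAverseCost

theorem infinite_setOf_fst_add_snd_eq (s : ℝ) : {p : ℝ × ℝ | p.1 + p.2 = s}.Infinite :=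
  Set.infinite_of_injective_forall_mem (f := fun t ↦ (t, s - t))
    (fun _ _ hst ↦ congrArg Prod.fst hst) (fun t ↦ by simp)

/-- The risk-averse example game has a continuum of Nash equilibria: for the two-player
costs `C₁(x₁,x₂) = c + a x₁² + 2a x₁ x₂ − a b x₁` and
`C₂(x₁,x₂) = c + a x₂² + 2a x₂ x₁ − a b x₂` with `a > 0`, every point on the line
`x₁ + x₂ = b/2` is a Nash equilibrium; in particular there are infinitely many Nash
equilibria. -/
theorem example_game_continuum_of_nash_equilibria
    (a b c : ℝ) (ha : 0 < a) :
    (∀ x₁ x₂ : ℝ, x₁ + x₂ = b / 2 →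
      (∀ y : ℝ, c + a * x₁ ^ 2 + 2 * a * x₁ * x₂ - a * b * x₁
          ≤ c + a * y ^ 2 + 2 * a * y * x₂ - a * b * y) ∧
      (∀ y : ℝ, c + a * x₂ ^ 2 + 2 * a * x₂ * x₁ - a * b * x₂
          ≤ c + a * y ^ 2 + 2 * a * y * x₁ - a * b * y)) ∧
    {p : ℝ × ℝ |
      (∀ y : ℝ, c + a * p.1 ^ 2 + 2 * a * p.1 * p.2 - a * b * p.1
          ≤ c + a * y ^ 2 + 2 * a * y * p.2 - a * b * y) ∧
      (∀ y : ℝ, c + a * p.2 ^ 2 + 2 * a * p.2 * p.1 - a * b * p.2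
          ≤ c + a * y ^ 2 + 2 * a * y * p.1 - a * b * y)}.Infinite := by
  have line_nash : ∀ p : ℝ × ℝ, p.1 + p.2 = b / 2 →
      IsNashEquilibrium (fun q ↦ riskAverseCost a b c q.1 q.2)
        (fun q ↦ riskAverseCost a b c q.2 q.1) p :=
    fun _ ↦ isNashEquilibrium_riskAverseCost_of_add_eq c ha.le
  exact ⟨fun x₁ x₂ ↦ line_nash (x₁, x₂),
    (infinite_setOf_fst_add_snd_eq (b / 2)).mono line_nash⟩
end
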